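/- arXiv:1407.5176 — 4 statements merged into one kernel-verified Lean document; each statement's English description precedes it below -/
import Mathlib

section
/- For every β > 0, J > 0, σ ∈ (1/2,1) and h ∈ ℝ, the thermodynamic limit of the Dyson hierarchical model free energy exists: the sequence k ↦ f_k(h,β,J,σ) converges to a finite limit f(h,β,J,σ) as k → ∞. -/
open Real Filter

/-- The ±1 value of a Boolean spin. -/
noncomputable def spin (b : Bool) : ℝ := if b then 1 else -1

/-- Embedding of the first half of the sites. -/
def finLeft {k : ℕ} (i : Fin (2 ^ k)) : Fin (2 ^ (k + 1)) :=
  ⟨i.1, lt_of_lt_of_le i.2 (Nat.pow_le_pow_right (by norm_num) (Nat.le_succ k))⟩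

/-- Embedding of the second half of the sites. -/
def finRight {k : ℕ} (i : Fin (2 ^ k)) : Fin (2 ^ (k + 1)) :=
  ⟨i.1 + 2 ^ k, by
    have h2 : 2 ^ (k + 1) = 2 ^ k + 2 ^ k := by rw [pow_succ]; ring
    have := i.2; omega⟩

/-- The Dyson hierarchical model Hamiltonian, defined recursively. -/
noncomputable def dysonH (J σ : ℝ) : (k : ℕ) → (Fin (2 ^ k) → Bool) → ℝ
  | 0, _ => 0
  | (k + 1), S =>
      dysonH J σ k (fun i => S (finLeft i)) + dysonH J σ k (fun i => S (finRight i)) -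
        J / (2 : ℝ) ^ (2 * σ * ((k : ℝ) + 1)) *
          ∑ i : Fin (2 ^ (k + 1)), ∑ j : Fin (2 ^ (k + 1)),
            if i < j then spin (S i) * spin (S j) else 0

/-- The finite-volume free energy of the Dyson hierarchical model. -/
noncomputable def dysonF (h β J σ : ℝ) (k : ℕ) : ℝ :=
  ((2 : ℝ) ^ k)⁻¹ * Real.log (∑ S : Fin (2 ^ k) → Bool,
    Real.exp (-β * dysonH J σ k S + β * h * ∑ i, spin (S i)))

/-! Splitting the volume into its two halves, `H_{k+1}` is the sum of the two half-Hamiltonians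
plus the level-`(k+1)` interaction, which is bounded by `J 2^{-2σ(k+1)} 4^{k+1}`. Hence
`log Z_{k+1}` and `2 log Z_k` differ by at most `|βJ| 2^{(2-2σ)(k+1)}`, so
`|f_{k+1} - f_k| ≤ |βJ| (2^{1-2σ})^{k+1}`. For `σ > 1/2` this is geometric, and `f_k` is Cauchy. -/

open Finset

def finHalvesEquiv (k : ℕ) : Fin (2 ^ k) ⊕ Fin (2 ^ k) ≃ Fin (2 ^ (k + 1)) :=
  finSumFinEquiv.trans (finCongr (by rw [pow_succ, mul_two]))

@[simp]
lemma finHalvesEquiv_inl {k : ℕ} (i : Fin (2 ^ k)) : finHalvesEquiv k (.inl i) = finLeft i := rfl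

@[simp]
lemma finHalvesEquiv_inr {k : ℕ} (i : Fin (2 ^ k)) : finHalvesEquiv k (.inr i) = finRight i :=
  Fin.ext (Nat.add_comm _ _)

lemma sum_fin_two_pow_succ {M : Type*} [AddCommMonoid M] {k : ℕ} (g : Fin (2 ^ (k + 1)) → M) :
    ∑ j, g j = ∑ i, g (finLeft i) + ∑ i, g (finRight i) := by
  rw [← (finHalvesEquiv k).sum_comp, Fintype.sum_sum_type]
  simp

lemma sum_mul_sum_halves {α R : Type*} [Fintype α] [NonUnitalNonAssocSemiring R] {k : ℕ}
    (F G : (Fin (2 ^ k) → α) → R) :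
    ∑ S : Fin (2 ^ (k + 1)) → α, F (fun i => S (finLeft i)) * G (fun i => S (finRight i)) =
      (∑ S, F S) * ∑ S, G S := by
  let split : (Fin (2 ^ (k + 1)) → α) ≃ (Fin (2 ^ k) → α) × (Fin (2 ^ k) → α) :=
    ((finHalvesEquiv k).arrowCongr (Equiv.refl α)).symm.trans (Equiv.sumArrowEquivProdArrow _ _ _)
  rw [Fintype.sum_mul_sum, ← Fintype.sum_prod_type']
  exact Fintype.sum_equiv split _ _ fun S => by
    simp [split, Equiv.sumArrowEquivProdArrow, Equiv.arrowCongr, Function.comp_def]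

lemma abs_spin (b : Bool) : |spin b| = 1 := by
  cases b <;> simp [spin]

lemma abs_sum_lt_pairs_le {n : ℕ} (s : Fin n → ℝ) (hs : ∀ i, |s i| ≤ 1) :
    |∑ i, ∑ j, if i < j then s i * s j else 0| ≤ (n : ℝ) ^ 2 := by
  have hterm : ∀ i j, |if i < j then s i * s j else 0| ≤ 1 := fun i j => by
    split_ifs
    · rw [abs_mul]; exact mul_le_one₀ (hs i) (abs_nonneg _) (hs j)
    · simp
  calc |∑ i, ∑ j, if i < j then s i * s j else 0|
      ≤ ∑ i, ∑ j, |if i < j then s i * s j else 0| :=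
        (abs_sum_le_sum_abs _ _).trans (sum_le_sum fun i _ => abs_sum_le_sum_abs _ _)
    _ ≤ ∑ _i : Fin n, ∑ _j : Fin n, (1 : ℝ) := by gcongr with i _ j; exact hterm i j
    _ = (n : ℝ) ^ 2 := by simp [sq]

lemma abs_log_sum_exp_add_sub_le {ι : Type*} [Fintype ι] [Nonempty ι] (a b : ι → ℝ) {B : ℝ}
    (hb : ∀ i, |b i| ≤ B) :
    |log (∑ i, exp (a i + b i)) - log (∑ i, exp (a i))| ≤ B := by
  have hZ : 0 < ∑ i, exp (a i) := sum_pos (fun i _ => exp_pos _) univ_nonempty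
  have hZb : 0 < ∑ i, exp (a i + b i) := sum_pos (fun i _ => exp_pos _) univ_nonempty
  rw [abs_sub_le_iff, sub_le_iff_le_add, sub_le_iff_le_add, log_le_iff_le_exp hZb,
    log_le_iff_le_exp hZ, exp_add, exp_add, exp_log hZ, exp_log hZb, mul_sum, mul_sum]
  constructor <;> gcongr with i
  · rw [exp_add, mul_comm]; gcongr; exact (abs_le.1 (hb i)).2
  · rw [← exp_add]; gcongr; linarith [(abs_le.1 (hb i)).1]

noncomputable def dysonExponent (h β J σ : ℝ) (k : ℕ) (S : Fin (2 ^ k) → Bool) : ℝ :=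
  -β * dysonH J σ k S + β * h * ∑ i, spin (S i)

noncomputable def dysonZ (h β J σ : ℝ) (k : ℕ) : ℝ :=
  ∑ S : Fin (2 ^ k) → Bool, exp (dysonExponent h β J σ k S)

lemma dysonF_eq_log_dysonZ (h β J σ : ℝ) (k : ℕ) :
    dysonF h β J σ k = ((2 : ℝ) ^ k)⁻¹ * log (dysonZ h β J σ k) := rfl

lemma dysonExponent_succ (h β J σ : ℝ) (k : ℕ) (S : Fin (2 ^ (k + 1)) → Bool) :
    dysonExponent h β J σ (k + 1) S =
      dysonExponent h β J σ k (fun i => S (finLeft i)) +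
        dysonExponent h β J σ k (fun i => S (finRight i)) +
        β * J / (2 : ℝ) ^ (2 * σ * ((k : ℝ) + 1)) *
          ∑ i, ∑ j, if i < j then spin (S i) * spin (S j) else 0 := by
  rw [dysonExponent, dysonH, sum_fin_two_pow_succ fun i => spin (S i)]
  simp only [dysonExponent]
  ring

lemma dysonZ_sq (h β J σ : ℝ) (k : ℕ) :
    dysonZ h β J σ k ^ 2 = ∑ S : Fin (2 ^ (k + 1)) → Bool,
      exp (dysonExponent h β J σ k (fun i => S (finLeft i)) +
        dysonExponent h β J σ k (fun i => S (finRight i))) := by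
  rw [sq, dysonZ]
  simp_rw [exp_add]
  exact (sum_mul_sum_halves _ _).symm

lemma abs_log_dysonZ_succ_sub_le (h β J σ : ℝ) (k : ℕ) :
    |log (dysonZ h β J σ (k + 1)) - 2 * log (dysonZ h β J σ k)| ≤
      |β * J / (2 : ℝ) ^ (2 * σ * ((k : ℝ) + 1))| * ((2 : ℝ) ^ (k + 1)) ^ 2 := by
  rw [show 2 * log (dysonZ h β J σ k) = log (dysonZ h β J σ k ^ 2) by rw [log_pow]; norm_num,
    dysonZ_sq, dysonZ]
  simp_rw [dysonExponent_succ]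
  refine abs_log_sum_exp_add_sub_le _ _ fun S => ?_
  rw [abs_mul]
  gcongr
  exact_mod_cast abs_sum_lt_pairs_le (fun i => spin (S i)) fun i => (abs_spin _).le

lemma abs_dysonF_succ_sub_le (h β J σ : ℝ) (k : ℕ) :
    |dysonF h β J σ (k + 1) - dysonF h β J σ k| ≤ |β * J| * (2 / (2 : ℝ) ^ (2 * σ)) ^ (k + 1) := by
  have hcoupling : (2 : ℝ) ^ (2 * σ * ((k : ℝ) + 1)) = ((2 : ℝ) ^ (2 * σ)) ^ (k + 1) := by
    rw [← rpow_natCast, ← rpow_mul zero_le_two]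
    push_cast
    rfl
  have hdiff : dysonF h β J σ (k + 1) - dysonF h β J σ k =
      ((2 : ℝ) ^ (k + 1))⁻¹ * (log (dysonZ h β J σ (k + 1)) - 2 * log (dysonZ h β J σ k)) := by
    rw [dysonF_eq_log_dysonZ, dysonF_eq_log_dysonZ, pow_succ]
    field_simp
  rw [hdiff, abs_mul, abs_inv, abs_pow, abs_two]
  calc ((2 : ℝ) ^ (k + 1))⁻¹ * |log (dysonZ h β J σ (k + 1)) - 2 * log (dysonZ h β J σ k)|
      ≤ ((2 : ℝ) ^ (k + 1))⁻¹ *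
          (|β * J / (2 : ℝ) ^ (2 * σ * ((k : ℝ) + 1))| * ((2 : ℝ) ^ (k + 1)) ^ 2) := by
        gcongr; exact abs_log_dysonZ_succ_sub_le h β J σ k
    _ = |β * J| * (2 / (2 : ℝ) ^ (2 * σ)) ^ (k + 1) := by
        rw [hcoupling, abs_div, abs_of_pos (by positivity : (0 : ℝ) < (2 ^ (2 * σ)) ^ (k + 1)),
          div_pow]
        field_simp

theorem dyson_free_energy_limit_exists_general (β J σ h : ℝ)
    (hσ : σ ∈ Set.Ioo (1 / 2 : ℝ) 1) :
    ∃ F : ℝ, Tendsto (fun k => dysonF h β J σ k) atTop (nhds F) := by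
  have hratio : 2 / (2 : ℝ) ^ (2 * σ) < 1 := by
    rw [div_lt_one (by positivity)]
    calc (2 : ℝ) = 2 ^ (1 : ℝ) := (rpow_one 2).symm
      _ < 2 ^ (2 * σ) := (rpow_lt_rpow_left_iff one_lt_two).2 (by linarith [hσ.1])
  refine cauchySeq_tendsto_of_complete <|
    cauchySeq_of_le_geometric _ (|β * J| * (2 / 2 ^ (2 * σ))) hratio fun k => ?_
  rw [dist_comm, Real.dist_eq, mul_assoc, ← pow_succ']
  exact abs_dysonF_succ_sub_le h β J σ k

/-- existence of the thermodynamic limit of the DHM free energy. -/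
theorem dyson_free_energy_limit_exists (β J σ h : ℝ) (hβ : 0 < β) (hJ : 0 < J)
    (hσ : σ ∈ Set.Ioo (1 / 2 : ℝ) 1) :
    ∃ F : ℝ, Tendsto (fun k => dysonF h β J σ k) atTop (nhds F) :=
  dyson_free_energy_limit_exists_general β J σ h hσ
end

section
/- For every k ∈ ℕ, β > 0, J > 0, σ ∈ (1/2,1), h ∈ ℝ, and all real trial parameters m, m_1, m_2, the finite-volume DHM free energy satisfies the mean-field mixture bound: f_{k+1}(h,β,J,σ) ≥ log 2 + (1/2) log cosh(βh + βJ(m_1 Σ_{l=1}^{k} 2^{l(1−2σ)} + 2^{(k+1)(1−2σ)} m)) + (1/2) log cosh(βh + βJ(m_2 Σ_{l=1}^{k} 2^{l(1−2σ)} + 2^{(k+1)(1−2σ)} m)) − (βJ/2)(2^{(k+1)(1−2σ)} m² + Σ_{l=1}^{k+1} 2^{−2lσ}) − (βJ/2) Σ_{l=1}^{k} 2^{l(1−2σ)} · (m_1² + m_2²)/2. -/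
open Real Filter

lemma spin_sq (b : Bool) : spin b ^ 2 = 1 := by cases b <;> simp [spin]

def halfEquiv (k : ℕ) : Fin (2 ^ k) ⊕ Fin (2 ^ k) ≃ Fin (2 ^ (k + 1)) :=
  finSumFinEquiv.trans (finCongr (by rw [pow_succ]; ring))

lemma halfEquiv_inl (k : ℕ) (i : Fin (2 ^ k)) : halfEquiv k (Sum.inl i) = finLeft i := by
  apply Fin.ext; simp [halfEquiv, finLeft]

lemma halfEquiv_inr (k : ℕ) (i : Fin (2 ^ k)) : halfEquiv k (Sum.inr i) = finRight i := by
  apply Fin.ext; simp [halfEquiv, finRight]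

lemma sum_split {M : Type*} [AddCommMonoid M] (k : ℕ) (f : Fin (2 ^ (k + 1)) → M) :
    ∑ i, f i = (∑ i : Fin (2 ^ k), f (finLeft i)) + ∑ i : Fin (2 ^ k), f (finRight i) := by
  rw [← Equiv.sum_comp (halfEquiv k) f, Fintype.sum_sum_type]
  simp [halfEquiv_inl, halfEquiv_inr]

lemma prod_split {M : Type*} [CommMonoid M] (k : ℕ) (f : Fin (2 ^ (k + 1)) → M) :
    ∏ i, f i = (∏ i : Fin (2 ^ k), f (finLeft i)) * ∏ i : Fin (2 ^ k), f (finRight i) := by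
  rw [← Equiv.prod_comp (halfEquiv k) f, Fintype.prod_sum_type]
  simp [halfEquiv_inl, halfEquiv_inr]

lemma pair_sum (n : ℕ) (s : Fin n → ℝ) (hs : ∀ i, s i ^ 2 = 1) :
    ∑ i, ∑ j, (if i < j then s i * s j else 0) = ((∑ i, s i) ^ 2 - n) / 2 := by
  have h1 : (∑ i, s i) ^ 2 = ∑ i, ∑ j, s i * s j := by
    rw [sq, Finset.sum_mul_sum]
  have h2 : ∀ i j : Fin n, s i * s j =
      (if i < j then s i * s j else 0) + (if i = j then s i * s j else 0) +
        (if j < i then s i * s j else 0) := by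
    intro i j
    rcases lt_trichotomy i j with h | h | h
    · simp [h, h.ne, (lt_asymm h)]
    · simp [h, lt_irrefl]
    · simp [h, h.ne', (lt_asymm h), (lt_asymm h : ¬ i < j)]
  have hD : ∑ i : Fin n, ∑ j : Fin n, (if i = j then s i * s j else 0) = n := by
    have : ∀ i : Fin n, ∑ j : Fin n, (if i = j then s i * s j else 0) = 1 := by
      intro i
      rw [Finset.sum_ite_eq]
      simp [← sq, hs i]
    rw [Finset.sum_congr rfl fun i _ => this i]
    simp
  have hQ : ∑ i : Fin n, ∑ j : Fin n, (if j < i then s i * s j else 0)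
      = ∑ i : Fin n, ∑ j : Fin n, (if i < j then s i * s j else 0) := by
    rw [Finset.sum_comm]
    congr 1; ext i; congr 1; ext j
    by_cases h : i < j <;> simp [h, mul_comm]
  have h3 : (∑ i, s i) ^ 2 =
      2 * (∑ i, ∑ j, (if i < j then s i * s j else 0)) + n := by
    rw [h1]
    calc ∑ i, ∑ j, s i * s j
        = ∑ i : Fin n, ∑ j : Fin n, ((if i < j then s i * s j else 0) +
            (if i = j then s i * s j else 0) + (if j < i then s i * s j else 0)) := by
          exact Finset.sum_congr rfl fun i _ => Finset.sum_congr rfl fun j _ => h2 i j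
      _ = 2 * (∑ i, ∑ j, (if i < j then s i * s j else 0)) + n := by
          simp only [Finset.sum_add_distrib]
          rw [hD, hQ]; ring
  linarith

lemma sum_exp_prod {ι : Type*} [Fintype ι] [DecidableEq ι] (a : ι → ℝ) :
    ∑ S : ι → Bool, Real.exp (∑ i, a i * spin (S i)) = ∏ i, (2 * Real.cosh (a i)) := by
  have h1 : ∀ i : ι, 2 * Real.cosh (a i) = ∑ b : Bool, Real.exp (a i * spin b) := by
    intro i
    rw [Real.cosh_eq]
    simp [spin, Fintype.sum_bool]
    ring
  rw [Finset.prod_congr rfl fun i _ => h1 i, Finset.prod_univ_sum]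
  rw [Fintype.piFinset_univ]
  exact Finset.sum_congr rfl fun S _ => by rw [← Real.exp_sum]

lemma two_rpow_natCast (n : ℕ) : ((2:ℝ) ^ n : ℝ) = (2:ℝ) ^ ((n:ℝ)) :=
  (Real.rpow_natCast 2 n).symm

lemma ham_bound (J σ : ℝ) (hJ : 0 ≤ J) : ∀ (k : ℕ) (t : ℝ) (S : Fin (2 ^ k) → Bool),
    J * (∑ l ∈ Finset.Icc 1 k, (2:ℝ) ^ ((l:ℝ) * (1 - 2*σ))) * t * (∑ i, spin (S i))
      - (2:ℝ) ^ k * (J / 2) *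
        (∑ l ∈ Finset.Icc 1 k, ((2:ℝ) ^ ((l:ℝ) * (1 - 2*σ)) * t^2 + (2:ℝ) ^ (-(2 * (l:ℝ) * σ))))
      ≤ - dysonH J σ k S := by
  intro k
  induction k with
  | zero => intro t S; simp [dysonH]
  | succ k IH =>
    intro t S
    have h1 := IH t (fun i => S (finLeft i))
    have h2 := IH t (fun i => S (finRight i))
    have hP := pair_sum (2 ^ (k + 1)) (fun i => spin (S i)) (fun i => spin_sq _)
    have hT := sum_split k (fun i => spin (S i))
    set T1 := ∑ i : Fin (2 ^ k), spin (S (finLeft i)) with hT1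
    set T2 := ∑ i : Fin (2 ^ k), spin (S (finRight i)) with hT2
    set w := (2:ℝ) ^ (((k:ℝ)+1) * (1 - 2*σ)) with hw
    set d := (2:ℝ) ^ (-(2 * ((k:ℝ)+1) * σ)) with hd
    set c := J / (2:ℝ) ^ (2 * σ * ((k:ℝ)+1)) with hc
    have hcpos : 0 ≤ c := div_nonneg hJ (Real.rpow_pos_of_pos two_pos _).le
    have hN : ((2:ℝ) ^ (k+1) : ℝ) = (2:ℝ) ^ (((k:ℝ)+1)) := by
      rw [two_rpow_natCast]; push_cast; ring_nf
    have hcN : c * (2:ℝ) ^ (k+1) = J * w := by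
      rw [hc, hN, hw, div_mul_eq_mul_div, mul_div_assoc, ← Real.rpow_sub two_pos]
      congr 1; ring
    have hcN2 : c * ((2:ℝ) ^ (k+1))^2 = J * w * (2:ℝ) ^ (k+1) := by
      rw [sq, ← mul_assoc, hcN]
    rw [hN] at hcN hcN2
    have hhalf : (2:ℝ) ^ (((k:ℝ)+1)) = 2 * (2:ℝ) ^ (k:ℕ) := by
      rw [← hN, pow_succ]; ring
    have hwd : w = (2:ℝ) ^ (((k:ℝ)+1)) * d := by
      rw [hw, hd, ← Real.rpow_add two_pos]
      congr 1; ring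
    have hq : 0 ≤ c * ((T1 + T2) - t * (2:ℝ) ^ (((k:ℝ)+1)))^2 :=
      mul_nonneg hcpos (sq_nonneg _)
    have e1 : J * w * t * (T1 + T2) = c * (2:ℝ) ^ (((k:ℝ)+1)) * t * (T1 + T2) := by
      rw [← hcN]
    have e2 : c * ((2:ℝ) ^ (((k:ℝ)+1)))^2 * t^2 / 2 = (2:ℝ) ^ (k:ℕ) * J * w * t^2 := by
      rw [hcN2, hhalf]; ring
    have e3 : c * (2:ℝ) ^ (((k:ℝ)+1)) / 2 = (2:ℝ) ^ (k:ℕ) * J * d := by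
      rw [hcN, hwd, hhalf]; ring
    have hstep : J * w * t * (T1 + T2) - (2:ℝ) ^ (k:ℕ) * J * w * t^2
        - (2:ℝ) ^ (k:ℕ) * J * d ≤ c * (((T1 + T2)^2 - (2:ℝ) ^ ((k:ℕ)+1)) / 2) := by
      rw [hN]
      linarith [hq, e1, e2, e3]
    show _ ≤ - dysonH J σ (k+1) S
    rw [dysonH]
    rw [Finset.sum_Icc_succ_top (Nat.succ_le_succ (Nat.zero_le k)),
        Finset.sum_Icc_succ_top (Nat.succ_le_succ (Nat.zero_le k))]
    push_cast
    rw [hP]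
    rw [show (∑ i : Fin (2 ^ (k+1)), spin (S i)) = T1 + T2 from hT]
    push_cast
    have hp2 : ((2:ℝ) ^ ((k:ℕ)+1) : ℝ) = 2 * (2:ℝ) ^ (k:ℕ) := by rw [pow_succ]; ring
    rw [hp2] at hstep ⊢
    linarith [h1, h2, hstep]

lemma top_bound (J σ : ℝ) (hJ : 0 ≤ J) (k : ℕ) (t : ℝ) (S : Fin (2 ^ (k + 1)) → Bool) :
    J * (2:ℝ) ^ (((k:ℝ)+1) * (1 - 2*σ)) * t * (∑ i, spin (S i))
      - (2:ℝ) ^ (k:ℕ) * J * (2:ℝ) ^ (((k:ℝ)+1) * (1 - 2*σ)) * t^2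
      - (2:ℝ) ^ (k:ℕ) * J * (2:ℝ) ^ (-(2 * ((k:ℝ)+1) * σ))
    ≤ J / (2:ℝ) ^ (2 * σ * ((k:ℝ)+1)) *
        ∑ i : Fin (2 ^ (k + 1)), ∑ j : Fin (2 ^ (k + 1)),
          (if i < j then spin (S i) * spin (S j) else 0) := by
  have hP := pair_sum (2 ^ (k + 1)) (fun i => spin (S i)) (fun i => spin_sq _)
  set T := ∑ i : Fin (2 ^ (k + 1)), spin (S i) with hTdef
  set w := (2:ℝ) ^ (((k:ℝ)+1) * (1 - 2*σ)) with hw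
  set d := (2:ℝ) ^ (-(2 * ((k:ℝ)+1) * σ)) with hd
  set c := J / (2:ℝ) ^ (2 * σ * ((k:ℝ)+1)) with hc
  have hcpos : 0 ≤ c := div_nonneg hJ (Real.rpow_pos_of_pos two_pos _).le
  have hN : ((2:ℝ) ^ (k+1) : ℝ) = (2:ℝ) ^ (((k:ℝ)+1)) := by
    rw [two_rpow_natCast]; push_cast; ring_nf
  have hcN : c * (2:ℝ) ^ (k+1) = J * w := by
    rw [hc, hN, hw, div_mul_eq_mul_div, mul_div_assoc, ← Real.rpow_sub two_pos]
    congr 1; ring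
  have hcN2 : c * ((2:ℝ) ^ (k+1))^2 = J * w * (2:ℝ) ^ (k+1) := by
    rw [sq, ← mul_assoc, hcN]
  rw [hN] at hcN hcN2
  have hhalf : (2:ℝ) ^ (((k:ℝ)+1)) = 2 * (2:ℝ) ^ (k:ℕ) := by
    rw [← hN, pow_succ]; ring
  have hwd : w = (2:ℝ) ^ (((k:ℝ)+1)) * d := by
    rw [hw, hd, ← Real.rpow_add two_pos]
    congr 1; ring
  have hq : 0 ≤ c * (T - t * (2:ℝ) ^ (((k:ℝ)+1)))^2 := mul_nonneg hcpos (sq_nonneg _)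
  have e1 : J * w * t * T = c * (2:ℝ) ^ (((k:ℝ)+1)) * t * T := by rw [← hcN]
  have e2 : c * ((2:ℝ) ^ (((k:ℝ)+1)))^2 * t^2 / 2 = (2:ℝ) ^ (k:ℕ) * J * w * t^2 := by
    rw [hcN2, hhalf]; ring
  have e3 : c * (2:ℝ) ^ (((k:ℝ)+1)) / 2 = (2:ℝ) ^ (k:ℕ) * J * d := by
    rw [hcN, hwd, hhalf]; ring
  rw [hP]
  push_cast
  rw [hN]
  linarith [hq, e1, e2, e3]

/-- finite-volume mean-field mixture bound for the DHM free energy. -/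
theorem dyson_mean_field_mixture_bound_finite (k : ℕ) (β J σ h m m1 m2 : ℝ) (hβ : 0 < β)
    (hJ : 0 < J) (hσ : σ ∈ Set.Ioo (1 / 2 : ℝ) 1) :
    dysonF h β J σ (k + 1) ≥
      Real.log 2 +
        (1 / 2) * Real.log (Real.cosh (β * h +
          β * J * (m1 * ∑ l ∈ Finset.Icc 1 k, (2 : ℝ) ^ ((l : ℝ) * (1 - 2 * σ)) +
            (2 : ℝ) ^ (((k : ℝ) + 1) * (1 - 2 * σ)) * m))) +
        (1 / 2) * Real.log (Real.cosh (β * h +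
          β * J * (m2 * ∑ l ∈ Finset.Icc 1 k, (2 : ℝ) ^ ((l : ℝ) * (1 - 2 * σ)) +
            (2 : ℝ) ^ (((k : ℝ) + 1) * (1 - 2 * σ)) * m))) -
        β * J / 2 * ((2 : ℝ) ^ (((k : ℝ) + 1) * (1 - 2 * σ)) * m ^ 2 +
          ∑ l ∈ Finset.Icc 1 (k + 1), (2 : ℝ) ^ (-(2 * (l : ℝ) * σ))) -
        β * J / 2 * (∑ l ∈ Finset.Icc 1 k, (2 : ℝ) ^ ((l : ℝ) * (1 - 2 * σ))) *
          ((m1 ^ 2 + m2 ^ 2) / 2) := by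
  set σsum := ∑ l ∈ Finset.Icc 1 k, (2:ℝ) ^ ((l:ℝ) * (1 - 2*σ)) with hσsum
  set w := (2:ℝ) ^ (((k:ℝ)+1) * (1 - 2*σ)) with hw
  set dd := (2:ℝ) ^ (-(2 * ((k:ℝ)+1) * σ)) with hdd
  set A1 := β * h + β * J * (m1 * σsum + w * m) with hA1
  set A2 := β * h + β * J * (m2 * σsum + w * m) with hA2
  set Cs1 := ∑ l ∈ Finset.Icc 1 k, ((2:ℝ) ^ ((l:ℝ) * (1 - 2*σ)) * m1^2 + (2:ℝ) ^ (-(2 * (l:ℝ) * σ))) with hCs1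
  set Cs2 := ∑ l ∈ Finset.Icc 1 k, ((2:ℝ) ^ ((l:ℝ) * (1 - 2*σ)) * m2^2 + (2:ℝ) ^ (-(2 * (l:ℝ) * σ))) with hCs2
  set C := -β * ((2:ℝ) ^ (k:ℕ) * (J/2) * Cs1 + (2:ℝ) ^ (k:ℕ) * (J/2) * Cs2
      + J * w * (2:ℝ) ^ (k:ℕ) * m^2 + (2:ℝ) ^ (k:ℕ) * J * dd) with hC
  set a : Fin (2 ^ (k+1)) → ℝ := fun i => if (i:ℕ) < 2 ^ k then A1 else A2 with ha
  -- pointwise bound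
  have key : ∀ S : Fin (2 ^ (k+1)) → Bool,
      C + ∑ i, a i * spin (S i) ≤ -β * dysonH J σ (k+1) S + β * h * ∑ i, spin (S i) := by
    intro S
    have hsplit : ∑ i, a i * spin (S i)
        = A1 * (∑ i : Fin (2 ^ k), spin (S (finLeft i)))
          + A2 * (∑ i : Fin (2 ^ k), spin (S (finRight i))) := by
      rw [sum_split k (fun i => a i * spin (S i)), Finset.mul_sum, Finset.mul_sum]
      congr 1
      · refine Finset.sum_congr rfl fun i _ => ?_
        simp [ha, finLeft, i.2]
      · refine Finset.sum_congr rfl fun i _ => ?_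
        have hni : ¬ ((i:ℕ) + 2 ^ k < 2 ^ k) := by omega
        simp [ha, finRight, hni]
    have hb1 := mul_le_mul_of_nonneg_left (ham_bound J σ hJ.le k m1 (fun i => S (finLeft i))) hβ.le
    have hb2 := mul_le_mul_of_nonneg_left (ham_bound J σ hJ.le k m2 (fun i => S (finRight i))) hβ.le
    have hb3 := mul_le_mul_of_nonneg_left (top_bound J σ hJ.le k m S) hβ.le
    have hT := sum_split k (fun i => spin (S i))
    rw [hsplit]
    show _ ≤ -β * dysonH J σ (k+1) S + _
    rw [dysonH]
    rw [hT] at hb3 ⊢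
    linarith [hb1, hb2, hb3]
  -- partition function lower bound
  have hZform : Real.exp C * ((2 * Real.cosh A1) ^ (2 ^ k : ℕ) * (2 * Real.cosh A2) ^ (2 ^ k : ℕ))
      = ∑ S : Fin (2 ^ (k+1)) → Bool, Real.exp (C + ∑ i, a i * spin (S i)) := by
    have h1 : ∀ S : Fin (2 ^ (k+1)) → Bool,
        Real.exp (C + ∑ i, a i * spin (S i)) = Real.exp C * Real.exp (∑ i, a i * spin (S i)) :=
      fun S => Real.exp_add _ _
    rw [Finset.sum_congr rfl fun S _ => h1 S, ← Finset.mul_sum, sum_exp_prod a]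
    congr 1
    have hL : ∏ i : Fin (2 ^ k), (2 * Real.cosh (a (finLeft i))) = (2 * Real.cosh A1) ^ (2 ^ k : ℕ) := by
      have he : ∀ i : Fin (2 ^ k), a (finLeft i) = A1 := fun i => by simp [ha, finLeft, i.2]
      rw [Finset.prod_congr rfl fun i _ => by rw [he i], Finset.prod_const, Finset.card_univ,
        Fintype.card_fin]
    have hR : ∏ i : Fin (2 ^ k), (2 * Real.cosh (a (finRight i))) = (2 * Real.cosh A2) ^ (2 ^ k : ℕ) := by
      have he : ∀ i : Fin (2 ^ k), a (finRight i) = A2 := fun i => by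
        have hni : ¬ ((i:ℕ) + 2 ^ k < 2 ^ k) := by omega
        simp [ha, finRight, hni]
      rw [Finset.prod_congr rfl fun i _ => by rw [he i], Finset.prod_const, Finset.card_univ,
        Fintype.card_fin]
    rw [prod_split k (fun i => 2 * Real.cosh (a i)), hL, hR]
  have hZ : Real.exp C * ((2 * Real.cosh A1) ^ (2 ^ k : ℕ) * (2 * Real.cosh A2) ^ (2 ^ k : ℕ))
      ≤ ∑ S : Fin (2 ^ (k+1)) → Bool,
          Real.exp (-β * dysonH J σ (k+1) S + β * h * ∑ i, spin (S i)) := by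
    rw [hZform]
    exact Finset.sum_le_sum fun S _ => Real.exp_le_exp.mpr (key S)
  have hpos : (0:ℝ) < Real.exp C * ((2 * Real.cosh A1) ^ (2 ^ k : ℕ) * (2 * Real.cosh A2) ^ (2 ^ k : ℕ)) := by
    have := Real.cosh_pos A1
    have := Real.cosh_pos A2
    positivity
  have hlog : Real.log (Real.exp C * ((2 * Real.cosh A1) ^ (2 ^ k : ℕ) * (2 * Real.cosh A2) ^ (2 ^ k : ℕ)))
      ≤ Real.log (∑ S : Fin (2 ^ (k+1)) → Bool,
          Real.exp (-β * dysonH J σ (k+1) S + β * h * ∑ i, spin (S i))) :=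
    Real.log_le_log hpos hZ
  have hlogval : Real.log (Real.exp C * ((2 * Real.cosh A1) ^ (2 ^ k : ℕ) * (2 * Real.cosh A2) ^ (2 ^ k : ℕ)))
      = C + (2 ^ k : ℕ) * (Real.log 2 + Real.log (Real.cosh A1))
          + (2 ^ k : ℕ) * (Real.log 2 + Real.log (Real.cosh A2)) := by
    rw [Real.log_mul (Real.exp_ne_zero C) (by positivity), Real.log_exp,
        Real.log_mul (by positivity) (by positivity),
        Real.log_pow, Real.log_pow,
        Real.log_mul two_ne_zero (Real.cosh_pos A1).ne',
        Real.log_mul two_ne_zero (Real.cosh_pos A2).ne']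
    ring
  have hmono := mul_le_mul_of_nonneg_left (hlogval ▸ hlog)
      (inv_nonneg.mpr (by positivity : (0:ℝ) ≤ (2:ℝ) ^ (k+1)))
  have hF : dysonF h β J σ (k + 1)
      ≥ ((2:ℝ) ^ (k+1))⁻¹ * (C + (2 ^ k : ℕ) * (Real.log 2 + Real.log (Real.cosh A1))
          + (2 ^ k : ℕ) * (Real.log 2 + Real.log (Real.cosh A2))) := by
    rw [dysonF]
    exact hmono
  refine le_trans ?_ hF
  -- now pure arithmetic
  have hnc : ((2 ^ k : ℕ) : ℝ) = (2:ℝ) ^ (k:ℕ) := by push_cast; rfl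
  have hCs1' : Cs1 = σsum * m1^2 + ∑ l ∈ Finset.Icc 1 k, (2:ℝ) ^ (-(2 * (l:ℝ) * σ)) := by
    rw [hCs1, Finset.sum_add_distrib, hσsum, Finset.sum_mul]
  have hCs2' : Cs2 = σsum * m2^2 + ∑ l ∈ Finset.Icc 1 k, (2:ℝ) ^ (-(2 * (l:ℝ) * σ)) := by
    rw [hCs2, Finset.sum_add_distrib, hσsum, Finset.sum_mul]
  have hDfull : ∑ l ∈ Finset.Icc 1 (k+1), (2:ℝ) ^ (-(2 * (l:ℝ) * σ))
      = (∑ l ∈ Finset.Icc 1 k, (2:ℝ) ^ (-(2 * (l:ℝ) * σ))) + dd := by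
    rw [Finset.sum_Icc_succ_top (Nat.succ_le_succ (Nat.zero_le k)), hdd]
    congr 2
    push_cast
    ring
  have hhalf : ((2:ℝ) ^ (k+1) : ℝ) = 2 * (2:ℝ) ^ (k:ℕ) := by rw [pow_succ]; ring
  have hPpos : (0:ℝ) < (2:ℝ) ^ (k:ℕ) := by positivity
  have hexp : (2 * (2:ℝ) ^ (k:ℕ))⁻¹ * (C + (2:ℝ) ^ (k:ℕ) * (Real.log 2 + Real.log (Real.cosh A1))
        + (2:ℝ) ^ (k:ℕ) * (Real.log 2 + Real.log (Real.cosh A2)))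
      = C / (2 * (2:ℝ) ^ (k:ℕ)) + (Real.log 2 + Real.log (Real.cosh A1)) / 2
        + (Real.log 2 + Real.log (Real.cosh A2)) / 2 := by
    field_simp
  have hCdiv : C / (2 * (2:ℝ) ^ (k:ℕ))
      = -β * ((J/2) * Cs1 + (J/2) * Cs2 + J * w * m^2 + J * dd) / 2 := by
    rw [hC]; field_simp
  rw [hnc, hhalf, hexp, hCdiv, hCs1', hCs2', hDfull]
  linarith
end

section
/- (Non-mean-field bound for the mixture state of the DHM.) For every β > 0, J > 0, σ ∈ (1/2,1), h ∈ ℝ and all real m_1, m_2, the thermodynamic-limit free energy satisfies f(h,β,J,σ) ≥ log 2 + (1/2) log cosh(βh + βJ m_1 (C_{2σ−1} − C_{2σ})) + (1/2) log cosh(βh + βJ m_2 (C_{2σ−1} − C_{2σ})) − (βJ/2)(C_{2σ−1} − C_{2σ})·(m_1² + m_2²)/2. -/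
open Real Filter

/-- The constant `C_y = 2^{-y} / (1 - 2^{-y})`. -/
noncomputable def Cconst (y : ℝ) : ℝ := (2 : ℝ) ^ (-y) / (1 - (2 : ℝ) ^ (-y))

/-!
The bound is the Gibbs variational principle `log ∑ exp A ≥ ∑ p (A - log p)` at volume `2^(k+1)`,
evaluated on the mixture trial state with i.i.d. spins of mean `tanh x₁` on the left half and
`tanh x₂` on the right half. Under an i.i.d. state of mean `t`, each block interaction of `H_k` has
expectation `t²` times its number of pairs, so the internal energy of each half involves the
coupling sums `∑_{l<k} (2^(l+1) - 1) 2^(-2σ(l+1)) → C_{2σ-1} - C_{2σ}`. The interaction between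
the two halves is only bounded below, through `∑_{i<j} sᵢsⱼ = ((∑ sᵢ)² - N)/2 ≥ -N/2`, and its
cost per site `βJ 2^(-2σ(k+1))/2` vanishes. Completing the square at `x = βh + βJmC` turns the
value of each half into at least `log (2 cosh x) - βJCm²/2`.
-/

namespace DysonHierarchical

open Finset

lemma spin_mul_self (b : Bool) : spin b * spin b = 1 := by
  cases b <;> norm_num [spin]

noncomputable def spinWeight (x : ℝ) (b : Bool) : ℝ := exp (x * spin b) / (2 * cosh x)

lemma spinWeight_pos (x : ℝ) (b : Bool) : 0 < spinWeight x b := by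
  unfold spinWeight; positivity

lemma sum_spinWeight (x : ℝ) : ∑ b, spinWeight x b = 1 := by
  have : 0 < 2 * cosh x := by positivity
  simp only [Fintype.sum_bool, spinWeight, ← add_div, spin, if_true, Bool.false_eq_true,
    if_false, mul_one, mul_neg_one, cosh_eq]
  field_simp

lemma sum_spinWeight_mul_spin (x : ℝ) : ∑ b, spinWeight x b * spin b = tanh x := by
  have : 0 < 2 * cosh x := by positivity
  simp only [Fintype.sum_bool, spinWeight, spin, if_true, Bool.false_eq_true, if_false, mul_one,
    mul_neg_one, tanh_eq_sinh_div_cosh, sinh_eq]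
  field_simp
  ring

lemma log_spinWeight (x : ℝ) (b : Bool) :
    log (spinWeight x b) = x * spin b - log (2 * cosh x) := by
  rw [spinWeight, log_div (exp_ne_zero _) (by positivity), log_exp]

noncomputable def gibbsFunctional {α : Type*} [Fintype α] (p A : α → ℝ) : ℝ :=
  ∑ a, p a * (A a - log (p a))

lemma gibbsFunctional_le_log_sum_exp {α : Type*} [Fintype α] {p : α → ℝ} (A : α → ℝ)
    (hp : ∀ a, 0 < p a) (hp1 : ∑ a, p a = 1) :
    gibbsFunctional p A ≤ log (∑ a, exp (A a)) := by
  have hjensen : exp (gibbsFunctional p A) ≤ ∑ a, exp (A a) :=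
    calc exp (∑ a, p a • (A a - log (p a)))
        ≤ ∑ a, p a • exp (A a - log (p a)) :=
          convexOn_exp.map_sum_le (fun a _ => (hp a).le) hp1 fun a _ => Set.mem_univ _
      _ = ∑ a, exp (A a) := by
          refine sum_congr rfl fun a _ => ?_
          rw [smul_eq_mul, exp_sub, exp_log (hp a), mul_div_cancel₀ _ (hp a).ne']
  simpa using log_le_log (exp_pos _) hjensen

section ProductWeight

variable {ι : Type*} [Fintype ι]

noncomputable def prodWeight (x : ℝ) (S : ι → Bool) : ℝ := ∏ i, spinWeight x (S i)

lemma prodWeight_pos (x : ℝ) (S : ι → Bool) : 0 < prodWeight x S :=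
  prod_pos fun i _ => spinWeight_pos x (S i)

lemma sum_prodWeight_mul_prod [DecidableEq ι] (x : ℝ) (g : ι → Bool → ℝ) :
    ∑ S : ι → Bool, prodWeight x S * ∏ i, g i (S i) = ∏ i, ∑ b, spinWeight x b * g i b := by
  simp_rw [prodWeight, ← prod_mul_distrib]
  exact (Fintype.prod_sum fun i b => spinWeight x b * g i b).symm

lemma sum_prodWeight [DecidableEq ι] (x : ℝ) : ∑ S : ι → Bool, prodWeight x S = 1 := by
  simpa only [mul_one, prod_const_one, sum_spinWeight] using
    sum_prodWeight_mul_prod (ι := ι) x fun _ _ => 1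

lemma sum_prodWeight_mul_prod_spin [DecidableEq ι] (x : ℝ) (s : Finset ι) :
    ∑ S : ι → Bool, prodWeight x S * ∏ i ∈ s, spin (S i) = tanh x ^ s.card := by
  have hsite : ∀ i, ∑ b, spinWeight x b * (if i ∈ s then spin b else 1) =
      if i ∈ s then tanh x else 1 := by
    intro i
    split_ifs
    · exact sum_spinWeight_mul_spin x
    · simpa using sum_spinWeight x
  simp_rw [← Fintype.prod_ite_mem s]
  rw [sum_prodWeight_mul_prod x fun i b => if i ∈ s then spin b else 1]
  simp only [hsite, Fintype.prod_ite_mem, prod_const]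

lemma sum_prodWeight_mul_spin [DecidableEq ι] (x : ℝ) (i : ι) :
    ∑ S : ι → Bool, prodWeight x S * spin (S i) = tanh x := by
  simpa using sum_prodWeight_mul_prod_spin x {i}

lemma sum_prodWeight_mul_spin_mul_spin [DecidableEq ι] (x : ℝ) (i j : ι) :
    ∑ S : ι → Bool, prodWeight x S * (spin (S i) * spin (S j)) =
      if i = j then 1 else tanh x ^ 2 := by
  split_ifs with hij
  · simp [hij, spin_mul_self, sum_prodWeight]
  · simpa [prod_pair hij, card_pair hij] using sum_prodWeight_mul_prod_spin x {i, j}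

lemma sum_prodWeight_mul_sum_spin [DecidableEq ι] (x : ℝ) :
    ∑ S : ι → Bool, prodWeight x S * ∑ i, spin (S i) = Fintype.card ι * tanh x := by
  simp_rw [mul_sum]
  rw [sum_comm]
  simp [sum_prodWeight_mul_spin]

lemma sum_prodWeight_mul_sq_sum_spin [DecidableEq ι] (x : ℝ) :
    ∑ S : ι → Bool, prodWeight x S * (∑ i, spin (S i)) ^ 2 =
      Fintype.card ι + ((Fintype.card ι : ℝ) ^ 2 - Fintype.card ι) * tanh x ^ 2 := by
  simp_rw [sq, sum_mul_sum, mul_sum]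
  rw [sum_comm]
  simp_rw [sum_comm (γ := ι → Bool), sum_prodWeight_mul_spin_mul_spin]
  have hdiag : ∀ i j : ι, (if i = j then (1 : ℝ) else tanh x ^ 2) =
      tanh x ^ 2 + if i = j then 1 - tanh x ^ 2 else 0 := by
    intro i j; split_ifs <;> ring
  simp only [hdiag, sum_add_distrib, sum_ite_eq, mem_univ, if_true, sum_const, card_univ,
    nsmul_eq_mul]
  ring

lemma log_prodWeight (x : ℝ) (S : ι → Bool) :
    log (prodWeight x S) = x * ∑ i, spin (S i) - Fintype.card ι * log (2 * cosh x) := by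
  rw [prodWeight, log_prod fun i _ => (spinWeight_pos x (S i)).ne']
  simp [log_spinWeight, sum_sub_distrib, mul_sum]

end ProductWeight

section PairSum

variable {ι : Type*} [Fintype ι] [LinearOrder ι]

lemma sum_sum_eq_two_mul_sum_lt_add_sum_diag {R : Type*} [CommSemiring R] (a : ι → ι → R)
    (ha : ∀ i j, a i j = a j i) :
    ∑ i, ∑ j, a i j = 2 * ∑ i, ∑ j, (if i < j then a i j else 0) + ∑ i, a i i := by
  have hsplit : ∀ i j, a i j =
      (if i < j then a i j else 0) + (if j < i then a j i else 0) + if i = j then a i i else 0 := by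
    intro i j
    rcases lt_trichotomy i j with h | rfl | h
    · simp [h, h.ne, h.not_gt]
    · simp
    · simp [h, h.ne', h.not_gt, ha i j]
  conv_lhs => enter [2, i, 2, j]; rw [hsplit i j]
  simp only [sum_add_distrib, sum_ite_eq, mem_univ, if_true]
  rw [sum_comm (f := fun i j => if j < i then a j i else 0)]
  ring

noncomputable def pairSum (S : ι → Bool) : ℝ :=
  ∑ i, ∑ j, if i < j then spin (S i) * spin (S j) else 0

lemma pairSum_eq (S : ι → Bool) :
    pairSum S = ((∑ i, spin (S i)) ^ 2 - Fintype.card ι) / 2 := by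
  have := sum_sum_eq_two_mul_sum_lt_add_sum_diag (fun i j => spin (S i) * spin (S j))
    fun i j => mul_comm _ _
  simp only [spin_mul_self, sum_const, card_univ, nsmul_eq_mul, mul_one, ← sum_mul_sum] at this
  rw [pairSum, sq, this]
  ring

lemma neg_card_div_two_le_pairSum (S : ι → Bool) : -(Fintype.card ι / 2 : ℝ) ≤ pairSum S := by
  rw [pairSum_eq]
  nlinarith [sq_nonneg (∑ i, spin (S i))]

lemma sum_prodWeight_mul_pairSum (x : ℝ) :
    ∑ S : ι → Bool, prodWeight x S * pairSum S =
      ((Fintype.card ι : ℝ) ^ 2 - Fintype.card ι) / 2 * tanh x ^ 2 := by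
  simp_rw [pairSum_eq, mul_div_assoc', mul_sub]
  rw [← sum_div, sum_sub_distrib, ← sum_mul, sum_prodWeight_mul_sq_sum_spin, sum_prodWeight]
  ring

end PairSum

section Halves

variable {k : ℕ}

def halvesEquiv (k : ℕ) : Fin (2 ^ k) ⊕ Fin (2 ^ k) ≃ Fin (2 ^ (k + 1)) :=
  finSumFinEquiv.trans (finCongr (by ring))

lemma halvesEquiv_inl (i : Fin (2 ^ k)) : halvesEquiv k (.inl i) = finLeft i := rfl

lemma halvesEquiv_inr (i : Fin (2 ^ k)) : halvesEquiv k (.inr i) = finRight i :=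
  Fin.ext (add_comm _ _)

lemma prod_fin_two_pow_succ {M : Type*} [CommMonoid M] (f : Fin (2 ^ (k + 1)) → M) :
    ∏ i, f i = (∏ i, f (finLeft i)) * ∏ i, f (finRight i) := by
  rw [← (halvesEquiv k).prod_comp, Fintype.prod_sum_type]
  simp only [halvesEquiv_inl, halvesEquiv_inr]

lemma sum_fin_two_pow_succ {M : Type*} [AddCommMonoid M] (f : Fin (2 ^ (k + 1)) → M) :
    ∑ i, f i = ∑ i, f (finLeft i) + ∑ i, f (finRight i) := by
  rw [← (halvesEquiv k).sum_comp, Fintype.sum_sum_type]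
  simp only [halvesEquiv_inl, halvesEquiv_inr]

def leftHalf {α : Type*} (S : Fin (2 ^ (k + 1)) → α) : Fin (2 ^ k) → α := fun i => S (finLeft i)

def rightHalf {α : Type*} (S : Fin (2 ^ (k + 1)) → α) : Fin (2 ^ k) → α := fun i => S (finRight i)

lemma sum_halves {M : Type*} [AddCommMonoid M]
    (F : (Fin (2 ^ k) → Bool) → (Fin (2 ^ k) → Bool) → M) :
    ∑ S : Fin (2 ^ (k + 1)) → Bool, F (leftHalf S) (rightHalf S) = ∑ S₁, ∑ S₂, F S₁ S₂ := by
  let e : (Fin (2 ^ (k + 1)) → Bool) ≃ (Fin (2 ^ k) → Bool) × (Fin (2 ^ k) → Bool) :=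
    ((halvesEquiv k).arrowCongr (Equiv.refl Bool)).symm.trans (Equiv.sumArrowEquivProdArrow _ _ _)
  have he : ∀ S, e S = (leftHalf S, rightHalf S) := fun S => by
    ext i <;> simp [e, leftHalf, rightHalf, halvesEquiv_inl, halvesEquiv_inr]
  rw [← Fintype.sum_prod_type']
  exact Fintype.sum_equiv e _ _ fun S => by rw [he]

end Halves

section Mixture

variable {k : ℕ}

noncomputable def mixWeight (x₁ x₂ : ℝ) (S : Fin (2 ^ (k + 1)) → Bool) : ℝ :=
  prodWeight x₁ (leftHalf S) * prodWeight x₂ (rightHalf S)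

lemma prodWeight_eq_mixWeight (x : ℝ) (S : Fin (2 ^ (k + 1)) → Bool) :
    prodWeight x S = mixWeight x x S :=
  prod_fin_two_pow_succ _

lemma mixWeight_pos (x₁ x₂ : ℝ) (S : Fin (2 ^ (k + 1)) → Bool) : 0 < mixWeight x₁ x₂ S :=
  mul_pos (prodWeight_pos _ _) (prodWeight_pos _ _)

lemma log_mixWeight (x₁ x₂ : ℝ) (S : Fin (2 ^ (k + 1)) → Bool) :
    log (mixWeight x₁ x₂ S) =
      log (prodWeight x₁ (leftHalf S)) + log (prodWeight x₂ (rightHalf S)) :=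
  log_mul (prodWeight_pos _ _).ne' (prodWeight_pos _ _).ne'

lemma sum_mixWeight_mul (x₁ x₂ : ℝ) (F : (Fin (2 ^ k) → Bool) → (Fin (2 ^ k) → Bool) → ℝ) :
    ∑ S, mixWeight x₁ x₂ S * F (leftHalf S) (rightHalf S) =
      ∑ S₁, ∑ S₂, prodWeight x₁ S₁ * prodWeight x₂ S₂ * F S₁ S₂ :=
  sum_halves fun S₁ S₂ => prodWeight x₁ S₁ * prodWeight x₂ S₂ * F S₁ S₂

lemma sum_mixWeight (x₁ x₂ : ℝ) : ∑ S : Fin (2 ^ (k + 1)) → Bool, mixWeight x₁ x₂ S = 1 := by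
  simpa [← sum_mul_sum, sum_prodWeight] using sum_mixWeight_mul x₁ x₂ fun _ _ => 1

lemma sum_mixWeight_mul_left (x₁ x₂ : ℝ) (G : (Fin (2 ^ k) → Bool) → ℝ) :
    ∑ S, mixWeight x₁ x₂ S * G (leftHalf S) = ∑ S, prodWeight x₁ S * G S := by
  rw [sum_mixWeight_mul x₁ x₂ fun S₁ _ => G S₁]
  refine sum_congr rfl fun S₁ _ => ?_
  rw [← sum_mul, ← mul_sum, sum_prodWeight, mul_one]

lemma sum_mixWeight_mul_right (x₁ x₂ : ℝ) (G : (Fin (2 ^ k) → Bool) → ℝ) :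
    ∑ S, mixWeight x₁ x₂ S * G (rightHalf S) = ∑ S, prodWeight x₂ S * G S := by
  rw [sum_mixWeight_mul x₁ x₂ fun _ S₂ => G S₂, sum_comm]
  refine sum_congr rfl fun S₂ _ => ?_
  rw [← sum_mul, ← sum_mul, sum_prodWeight, one_mul]

end Mixture

noncomputable def couplingSum (σ : ℝ) (k : ℕ) : ℝ :=
  ∑ l ∈ range k, ((2 : ℝ) ^ (2 * σ * ((l : ℝ) + 1)))⁻¹ * ((2 : ℝ) ^ (l + 1) - 1)

lemma inv_two_rpow_mul_eq_pow (y : ℝ) (l : ℕ) :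
    ((2 : ℝ) ^ (y * ((l : ℝ) + 1)))⁻¹ = ((2 : ℝ) ^ (-y)) ^ (l + 1) := by
  rw [← rpow_natCast, ← rpow_mul zero_le_two, ← rpow_neg zero_le_two]
  push_cast
  ring_nf

lemma tendsto_inv_two_rpow_mul (y : ℝ) (hy : 0 < y) :
    Tendsto (fun k : ℕ => ((2 : ℝ) ^ (y * ((k : ℝ) + 1)))⁻¹) atTop (nhds 0) := by
  simp_rw [inv_two_rpow_mul_eq_pow]
  exact (tendsto_pow_atTop_nhds_zero_of_lt_one (by positivity)
    (rpow_lt_one_of_one_lt_of_neg one_lt_two (by linarith))).comp (tendsto_add_atTop_nat 1)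

lemma tendsto_sum_range_two_rpow_neg_pow (y : ℝ) (hy : 0 < y) :
    Tendsto (fun k => ∑ l ∈ range k, ((2 : ℝ) ^ (-y)) ^ (l + 1)) atTop (nhds (Cconst y)) := by
  have hr : (2 : ℝ) ^ (-y) < 1 := rpow_lt_one_of_one_lt_of_neg one_lt_two (by linarith)
  simpa [Cconst, pow_succ', div_eq_mul_inv] using
    ((hasSum_geometric_of_lt_one (by positivity) hr).mul_left ((2 : ℝ) ^ (-y))).tendsto_sum_nat

lemma couplingSum_eq (σ : ℝ) (k : ℕ) :
    couplingSum σ k = ∑ l ∈ range k, ((2 : ℝ) ^ (-(2 * σ - 1))) ^ (l + 1) -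
      ∑ l ∈ range k, ((2 : ℝ) ^ (-(2 * σ))) ^ (l + 1) := by
  rw [couplingSum, ← sum_sub_distrib]
  have htwo : (2 : ℝ) ^ (-(2 * σ - 1)) = 2 * 2 ^ (-(2 * σ)) := by
    rw [show -(2 * σ - 1) = 1 + -(2 * σ) by ring, rpow_add two_pos, rpow_one]
  refine sum_congr rfl fun l _ => ?_
  rw [htwo, mul_pow, inv_two_rpow_mul_eq_pow]
  ring

lemma tendsto_couplingSum (σ : ℝ) (hσ : 1 / 2 < σ) :
    Tendsto (couplingSum σ) atTop (nhds (Cconst (2 * σ - 1) - Cconst (2 * σ))) := by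
  refine ((tendsto_sum_range_two_rpow_neg_pow _ (by linarith)).sub
    (tendsto_sum_range_two_rpow_neg_pow _ (by linarith))).congr fun k => ?_
  exact (couplingSum_eq σ k).symm

lemma couplingSum_nonneg (σ : ℝ) (k : ℕ) : 0 ≤ couplingSum σ k :=
  sum_nonneg fun l _ => mul_nonneg (by positivity) (sub_nonneg.2 (one_le_pow₀ one_le_two))

lemma dysonH_succ (J σ : ℝ) {k : ℕ} (S : Fin (2 ^ (k + 1)) → Bool) :
    dysonH J σ (k + 1) S = dysonH J σ k (leftHalf S) + dysonH J σ k (rightHalf S) -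
      J / (2 : ℝ) ^ (2 * σ * ((k : ℝ) + 1)) * pairSum S :=
  rfl

lemma sum_prodWeight_mul_dysonH (J σ x : ℝ) (k : ℕ) :
    ∑ S, prodWeight x S * dysonH J σ k S = -(J / 2) * 2 ^ k * couplingSum σ k * tanh x ^ 2 := by
  induction k with
  | zero => simp [dysonH, couplingSum]
  | succ k ih =>
    have hleft : ∑ S : Fin (2 ^ (k + 1)) → Bool, prodWeight x S * dysonH J σ k (leftHalf S) =
        -(J / 2) * 2 ^ k * couplingSum σ k * tanh x ^ 2 := by
      simp_rw [prodWeight_eq_mixWeight x]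
      rw [sum_mixWeight_mul_left, ih]
    have hright : ∑ S : Fin (2 ^ (k + 1)) → Bool, prodWeight x S * dysonH J σ k (rightHalf S) =
        -(J / 2) * 2 ^ k * couplingSum σ k * tanh x ^ 2 := by
      simp_rw [prodWeight_eq_mixWeight x]
      rw [sum_mixWeight_mul_right, ih]
    simp_rw [dysonH_succ, mul_sub, mul_add, sum_sub_distrib, sum_add_distrib, hleft, hright,
      mul_left_comm (prodWeight x _), ← mul_sum, sum_prodWeight_mul_pairSum]
    simp only [couplingSum, sum_range_succ, Fintype.card_fin]
    push_cast
    field_simp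
    ring

noncomputable def boltzmannExponent (β J σ h : ℝ) (k : ℕ) (S : Fin (2 ^ k) → Bool) : ℝ :=
  -β * dysonH J σ k S + β * h * ∑ i, spin (S i)

lemma dysonF_eq (β J σ h : ℝ) (k : ℕ) :
    dysonF h β J σ k = ((2 : ℝ) ^ k)⁻¹ * log (∑ S, exp (boltzmannExponent β J σ h k S)) :=
  rfl

lemma boltzmannExponent_succ (β J σ h : ℝ) {k : ℕ} (S : Fin (2 ^ (k + 1)) → Bool) :
    boltzmannExponent β J σ h (k + 1) S =
      boltzmannExponent β J σ h k (leftHalf S) + boltzmannExponent β J σ h k (rightHalf S) +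
        β * J / (2 : ℝ) ^ (2 * σ * ((k : ℝ) + 1)) * pairSum S := by
  simp only [boltzmannExponent, dysonH_succ, sum_fin_two_pow_succ fun i => spin (S i)]
  simp only [leftHalf, rightHalf]
  ring

noncomputable def trialValue (β J h c x : ℝ) : ℝ :=
  β * J / 2 * c * tanh x ^ 2 + β * h * tanh x + log (2 * cosh x) - x * tanh x

lemma gibbsFunctional_prodWeight (β J σ h x : ℝ) (k : ℕ) :
    gibbsFunctional (prodWeight x) (boltzmannExponent β J σ h k) =
      2 ^ k * trialValue β J h (couplingSum σ k) x := by
  have hterm : ∀ S : Fin (2 ^ k) → Bool,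
      prodWeight x S * (boltzmannExponent β J σ h k S - log (prodWeight x S)) =
        -β * (prodWeight x S * dysonH J σ k S) + (β * h - x) * (prodWeight x S * ∑ i, spin (S i))
          + 2 ^ k * log (2 * cosh x) * prodWeight x S := by
    intro S
    rw [boltzmannExponent, log_prodWeight, Fintype.card_fin]
    push_cast
    ring
  simp only [gibbsFunctional, hterm, sum_add_distrib, ← mul_sum,
    sum_prodWeight_mul_dysonH, sum_prodWeight_mul_sum_spin, sum_prodWeight, Fintype.card_fin]
  push_cast
  rw [trialValue]
  ring

lemma gibbsFunctional_mixWeight (β J σ h x₁ x₂ : ℝ) (k : ℕ) :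
    gibbsFunctional (mixWeight x₁ x₂) (boltzmannExponent β J σ h (k + 1)) =
      gibbsFunctional (prodWeight x₁) (boltzmannExponent β J σ h k) +
        gibbsFunctional (prodWeight x₂) (boltzmannExponent β J σ h k) +
        β * J / (2 : ℝ) ^ (2 * σ * ((k : ℝ) + 1)) *
          ∑ S : Fin (2 ^ (k + 1)) → Bool, mixWeight x₁ x₂ S * pairSum S := by
  have hterm : ∀ S : Fin (2 ^ (k + 1)) → Bool,
      mixWeight x₁ x₂ S * (boltzmannExponent β J σ h (k + 1) S - log (mixWeight x₁ x₂ S)) =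
        mixWeight x₁ x₂ S * (boltzmannExponent β J σ h k (leftHalf S) -
            log (prodWeight x₁ (leftHalf S))) +
          mixWeight x₁ x₂ S * (boltzmannExponent β J σ h k (rightHalf S) -
            log (prodWeight x₂ (rightHalf S))) +
          β * J / (2 : ℝ) ^ (2 * σ * ((k : ℝ) + 1)) * (mixWeight x₁ x₂ S * pairSum S) := by
    intro S
    rw [boltzmannExponent_succ, log_mixWeight]
    ring
  simp only [gibbsFunctional, hterm, sum_add_distrib, ← mul_sum]
  rw [sum_mixWeight_mul_left x₁ x₂ fun S => boltzmannExponent β J σ h k S - log (prodWeight x₁ S),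
    sum_mixWeight_mul_right x₁ x₂ fun S => boltzmannExponent β J σ h k S - log (prodWeight x₂ S)]

lemma le_dysonF_succ (β J σ h x₁ x₂ : ℝ) (hβJ : 0 ≤ β * J) (k : ℕ) :
    (trialValue β J h (couplingSum σ k) x₁ + trialValue β J h (couplingSum σ k) x₂) / 2 -
        β * J / 2 * ((2 : ℝ) ^ (2 * σ * ((k : ℝ) + 1)))⁻¹ ≤ dysonF h β J σ (k + 1) := by
  have hgibbs := gibbsFunctional_le_log_sum_exp (boltzmannExponent β J σ h (k + 1))
    (mixWeight_pos x₁ x₂) (sum_mixWeight x₁ x₂)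
  rw [gibbsFunctional_mixWeight, gibbsFunctional_prodWeight, gibbsFunctional_prodWeight] at hgibbs
  have hpair : -(2 ^ k : ℝ) ≤ ∑ S : Fin (2 ^ (k + 1)) → Bool, mixWeight x₁ x₂ S * pairSum S :=
    calc -(2 ^ k : ℝ) = ∑ S : Fin (2 ^ (k + 1)) → Bool, mixWeight x₁ x₂ S * -(2 ^ k : ℝ) := by
          rw [← sum_mul, sum_mixWeight, one_mul]
      _ ≤ _ := by
          refine sum_le_sum fun S _ => mul_le_mul_of_nonneg_left ?_ (mixWeight_pos x₁ x₂ S).le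
          simpa [pow_succ] using neg_card_div_two_le_pairSum S
  have hcoupling := mul_le_mul_of_nonneg_left hpair
    (by positivity : 0 ≤ β * J / (2 : ℝ) ^ (2 * σ * ((k : ℝ) + 1)))
  rw [dysonF_eq, le_inv_mul_iff₀ (by positivity), pow_succ]
  linear_combination hgibbs + hcoupling

lemma log_two_cosh_sub_le_trialValue (β J h c m : ℝ) (hc : 0 ≤ β * J * c) :
    log (2 * cosh (β * h + β * J * m * c)) - β * J / 2 * c * m ^ 2 ≤
      trialValue β J h c (β * h + β * J * m * c) := by
  rw [trialValue]
  nlinarith [mul_nonneg hc (sq_nonneg (tanh (β * h + β * J * m * c) - m))]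

end DysonHierarchical

open DysonHierarchical

/-- non-mean-field bound for the mixture state of the DHM. -/
theorem dyson_nmf_mixture_bound (β J σ h m1 m2 : ℝ) (hβ : 0 < β) (hJ : 0 < J)
    (hσ : σ ∈ Set.Ioo (1 / 2 : ℝ) 1) (F : ℝ)
    (hF : Tendsto (fun k => dysonF h β J σ k) atTop (nhds F)) :
    F ≥ Real.log 2 +
        (1 / 2) * Real.log (Real.cosh (β * h + β * J * m1 * (Cconst (2 * σ - 1) - Cconst (2 * σ)))) +
        (1 / 2) * Real.log (Real.cosh (β * h + β * J * m2 * (Cconst (2 * σ - 1) - Cconst (2 * σ)))) -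
        β * J / 2 * (Cconst (2 * σ - 1) - Cconst (2 * σ)) * ((m1 ^ 2 + m2 ^ 2) / 2) := by
  set C := Cconst (2 * σ - 1) - Cconst (2 * σ)
  have hC : Tendsto (couplingSum σ) atTop (nhds C) := tendsto_couplingSum σ hσ.1
  have hβJ : 0 ≤ β * J := by positivity
  have hβJC : 0 ≤ β * J * C := mul_nonneg hβJ (ge_of_tendsto' hC (couplingSum_nonneg σ))
  have htrial (x : ℝ) :
      Tendsto (fun k => trialValue β J h (couplingSum σ k) x) atTop (nhds (trialValue β J h C x)) :=
    ((by unfold trialValue; fun_prop : Continuous fun c => trialValue β J h c x).tendsto C).comp hC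
  set x₁ := β * h + β * J * m1 * C
  set x₂ := β * h + β * J * m2 * C
  have hlim := (((htrial x₁).add (htrial x₂)).div_const 2).sub
    ((tendsto_inv_two_rpow_mul (2 * σ) (by linarith [hσ.1])).const_mul (β * J / 2))
  have hbound := le_of_tendsto_of_tendsto' hlim (hF.comp (tendsto_add_atTop_nat 1))
    (le_dysonF_succ β J σ h x₁ x₂ hβJ)
  have h₁ := log_two_cosh_sub_le_trialValue β J h C m1 hβJC
  have h₂ := log_two_cosh_sub_le_trialValue β J h C m2 hβJC
  rw [log_mul two_ne_zero (cosh_pos _).ne'] at h₁ h₂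
  linarith
end

section
/- (Non-mean-field bound for the pure state of the DHM.) For every β > 0, J > 0, σ ∈ (1/2,1), h ∈ ℝ and every real m, the thermodynamic-limit free energy satisfies f(h,β,J,σ) ≥ log 2 + log cosh(βh + βJ m (C_{2σ−1} − C_{2σ})) − (βJ/2)(C_{2σ−1} − C_{2σ}) m². -/
/-
Gibbs' variational principle: `log Z ≥ E_w[-βH + βhM] - E_w[log w]` for every probability weight
`w` on configurations. Take for `w` the product state in which the spins are independent with the
tilted law `b ↦ exp (x s_b) / (2 cosh x)`, of mean `t = tanh x`. Under a product state of mean `t`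
every two-spin correlation is `t²`, so the level-`k` energy is `-(J/2) D_k t²` per site with
`D_k = ∑_{l<k} (2^{l+1} - 1) 2^{-2σ(l+1)}`, a difference of two geometric series converging to
`C_{2σ-1} - C_{2σ}`. With the tilt `x = βh + βJ m D` the resulting bound is the claimed one plus
`(βJ/2) D (t - m)² ≥ 0`.
-/

open Real Filter

open Finset Topology

lemma sum_mul_sub_log_le_log_sum_exp {α : Type*} [Fintype α] {w : α → ℝ}
    (hw : ∀ a, 0 < w a) (hw_sum : ∑ a, w a = 1) (A : α → ℝ) :
    ∑ a, w a * (A a - log (w a)) ≤ log (∑ a, exp (A a)) := by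
  have hjensen := convexOn_exp.map_sum_le (t := univ) (p := fun a => A a - log (w a))
    (fun a _ => (hw a).le) hw_sum (fun _ _ => Set.mem_univ _)
  have hcancel (a : α) : w a • exp (A a - log (w a)) = exp (A a) := by
    rw [smul_eq_mul, exp_sub, exp_log (hw a), mul_div_cancel₀ _ (hw a).ne']
  simp only [hcancel, smul_eq_mul] at hjensen
  have hα : (univ : Finset α).Nonempty :=
    nonempty_of_sum_ne_zero (f := w) (by rw [hw_sum]; exact one_ne_zero)
  exact (le_log_iff_exp_le (sum_pos (fun a _ => exp_pos _) hα)).2 hjensen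

section ProductWeight

variable {ι : Type*} [Fintype ι]

def prodWeight (p : Bool → ℝ) (S : ι → Bool) : ℝ := ∏ i, p (S i)

lemma prodWeight_pos {p : Bool → ℝ} (hp : ∀ b, 0 < p b) (S : ι → Bool) :
    0 < prodWeight p S :=
  prod_pos fun i _ => hp (S i)

variable [DecidableEq ι]

lemma sum_prodWeight_mul_prod (p : Bool → ℝ) (g : ι → Bool → ℝ) :
    ∑ S : ι → Bool, prodWeight p S * ∏ i, g i (S i) = ∏ i, ∑ b, p b * g i b := by
  simp_rw [prodWeight, ← prod_mul_distrib]
  exact (Fintype.prod_sum fun i b => p b * g i b).symm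

variable {p : Bool → ℝ}

lemma sum_prodWeight (hp : ∑ b, p b = 1) :
    ∑ S : ι → Bool, prodWeight p S = 1 := by
  have h := sum_prodWeight_mul_prod (ι := ι) p (fun _ _ => 1)
  simpa only [prod_const_one, mul_one, hp, one_pow, prod_const] using h

lemma sum_prodWeight_mul_apply (hp : ∑ b, p b = 1) (g : Bool → ℝ) (i : ι) :
    ∑ S : ι → Bool, prodWeight p S * g (S i) = ∑ b, p b * g b := by
  have h := sum_prodWeight_mul_prod p (fun j b => if j = i then g b else 1)
  rw [Fintype.prod_eq_single i (fun j hj => by simpa [hj] using hp)] at h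
  simpa [Fintype.prod_ite_eq'] using h

lemma sum_prodWeight_mul_apply_mul_apply (hp : ∑ b, p b = 1) (g g' : Bool → ℝ)
    {i j : ι} (hij : i ≠ j) :
    ∑ S : ι → Bool, prodWeight p S * (g (S i) * g' (S j)) =
      (∑ b, p b * g b) * ∑ b, p b * g' b := by
  have h := sum_prodWeight_mul_prod p
    (fun l b => if l = i then g b else if l = j then g' b else 1)
  have hS (S : ι → Bool) :
      (∏ l, if l = i then g (S l) else if l = j then g' (S l) else 1) = g (S i) * g' (S j) := by
    rw [Fintype.prod_eq_mul i j hij (fun l hl => by simp [hl.1, hl.2])]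
    simp [hij.symm]
  rw [Fintype.prod_eq_mul i j hij (fun l hl => by simpa [hl.1, hl.2] using hp)] at h
  simpa [hS, hij.symm] using h

lemma sum_prodWeight_mul_sum_apply (hp : ∑ b, p b = 1) (g : Bool → ℝ) :
    ∑ S : ι → Bool, prodWeight p S * ∑ i, g (S i) = Fintype.card ι * ∑ b, p b * g b := by
  simp_rw [mul_sum]
  rw [sum_comm]
  simp [sum_prodWeight_mul_apply hp]

lemma sum_prodWeight_mul_log (hp_pos : ∀ b, 0 < p b) (hp : ∑ b, p b = 1) :
    ∑ S : ι → Bool, prodWeight p S * log (prodWeight p S) =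
      Fintype.card ι * ∑ b, p b * log (p b) := by
  simp_rw [prodWeight, log_prod fun i _ => (hp_pos _).ne']
  exact sum_prodWeight_mul_sum_apply hp (fun b => log (p b))

end ProductWeight

lemma sum_sum_ite_lt_one_mul_two (n : ℕ) :
    (∑ i : Fin n, ∑ j : Fin n, if i < j then (1 : ℝ) else 0) * 2 = n * (n - 1) := by
  rw [sum_comm]
  simp only [sum_boole, filter_gt_eq_Iio, Fin.card_Iio]
  rw [Fin.sum_univ_eq_sum_range (fun j => (j : ℝ)) n]
  rcases n with _ | n
  · simp
  · have h : ((∑ j ∈ range (n + 1), j : ℕ) : ℝ) * 2 = (n + 1) * n := by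
      exact_mod_cast (by simpa using sum_range_id_mul_two (n + 1))
    push_cast at h ⊢
    linarith

lemma sum_prodWeight_mul_sum_sum_lt {p : Bool → ℝ} (hp : ∑ b, p b = 1) (n : ℕ) :
    ∑ S : Fin n → Bool, prodWeight p S *
        (∑ i, ∑ j, if i < j then spin (S i) * spin (S j) else 0) =
      (∑ b, p b * spin b) ^ 2 * (n * (n - 1) / 2) := by
  rw [← sum_sum_ite_lt_one_mul_two, mul_div_cancel_right₀ _ two_ne_zero]
  simp_rw [mul_sum, mul_ite, mul_zero]
  rw [sum_comm]
  refine sum_congr rfl fun i _ => ?_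
  rw [sum_comm]
  refine sum_congr rfl fun j _ => ?_
  split_ifs with hij
  · rw [sum_prodWeight_mul_apply_mul_apply hp _ _ hij.ne, mul_one, sq]
  · simp

def finSplit (k : ℕ) : Fin (2 ^ k) ⊕ Fin (2 ^ k) ≃ Fin (2 ^ (k + 1)) :=
  finSumFinEquiv.trans (finCongr (by ring))

lemma finSplit_inl {k : ℕ} (i : Fin (2 ^ k)) : finSplit k (.inl i) = finLeft i := rfl

lemma finSplit_inr {k : ℕ} (i : Fin (2 ^ k)) : finSplit k (.inr i) = finRight i := by
  ext
  simp [finSplit, finRight]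

lemma sum_split_s9 {k : ℕ} (G : (Fin (2 ^ k) → Bool) → (Fin (2 ^ k) → Bool) → ℝ) :
    ∑ S : Fin (2 ^ (k + 1)) → Bool, G (fun i => S (finLeft i)) (fun i => S (finRight i)) =
      ∑ T, ∑ U, G T U := by
  let e := (Equiv.sumArrowEquivProdArrow _ _ Bool).symm.trans
    ((finSplit k).arrowCongr (Equiv.refl Bool))
  rw [← e.sum_comp, Fintype.sum_prod_type]
  simp [e, ← finSplit_inl, ← finSplit_inr]

lemma prodWeight_split {k : ℕ} (p : Bool → ℝ) (S : Fin (2 ^ (k + 1)) → Bool) :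
    prodWeight p S =
      prodWeight p (fun i => S (finLeft i)) * prodWeight p (fun i => S (finRight i)) := by
  rw [prodWeight, ← (finSplit k).prod_comp, Fintype.prod_sum_type]
  simp only [finSplit_inl, finSplit_inr, prodWeight]

lemma sum_prodWeight_mul_split_add {p : Bool → ℝ} (hp : ∑ b, p b = 1) {k : ℕ}
    (G G' : (Fin (2 ^ k) → Bool) → ℝ) :
    ∑ S : Fin (2 ^ (k + 1)) → Bool,
        prodWeight p S * (G (fun i => S (finLeft i)) + G' (fun i => S (finRight i))) =
      ∑ T, prodWeight p T * G T + ∑ T, prodWeight p T * G' T := by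
  simp_rw [prodWeight_split p]
  rw [sum_split_s9 (fun T U => prodWeight p T * prodWeight p U * (G T + G' U))]
  simp_rw [mul_add, sum_add_distrib]
  rw [sum_comm (f := fun T U => prodWeight p T * prodWeight p U * G' U)]
  simp_rw [mul_right_comm (prodWeight p _) (prodWeight p _) (G _), mul_assoc, ← mul_sum,
    ← sum_mul, sum_prodWeight hp]
  simp

noncomputable def meanFieldCoupling (σ : ℝ) (k : ℕ) : ℝ :=
  ∑ l ∈ range k, ((2 : ℝ) ^ (l + 1) - 1) / (2 : ℝ) ^ (2 * σ * ((l : ℝ) + 1))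

lemma meanFieldCoupling_succ (σ : ℝ) (k : ℕ) :
    meanFieldCoupling σ (k + 1) =
      meanFieldCoupling σ k + ((2 : ℝ) ^ (k + 1) - 1) / (2 : ℝ) ^ (2 * σ * ((k : ℝ) + 1)) :=
  sum_range_succ _ _

lemma sum_prodWeight_mul_dysonH {p : Bool → ℝ} (hp : ∑ b, p b = 1) (J σ : ℝ) (k : ℕ) :
    ∑ S : Fin (2 ^ k) → Bool, prodWeight p S * dysonH J σ k S =
      -(J / 2) * meanFieldCoupling σ k * (∑ b, p b * spin b) ^ 2 * 2 ^ k := by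
  induction k with
  | zero => simp [dysonH, meanFieldCoupling]
  | succ k ih =>
    have hsplit : ∑ S : Fin (2 ^ (k + 1)) → Bool, prodWeight p S * dysonH J σ (k + 1) S =
        ∑ S : Fin (2 ^ (k + 1)) → Bool, prodWeight p S *
            (dysonH J σ k (fun i => S (finLeft i)) + dysonH J σ k (fun i => S (finRight i))) -
          J / (2 : ℝ) ^ (2 * σ * ((k : ℝ) + 1)) * ∑ S : Fin (2 ^ (k + 1)) → Bool,
            prodWeight p S * ∑ i, ∑ j, if i < j then spin (S i) * spin (S j) else 0 := by
      rw [mul_sum, ← sum_sub_distrib]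
      exact sum_congr rfl fun S _ => by rw [dysonH]; ring
    rw [hsplit, sum_prodWeight_mul_split_add hp, ih, sum_prodWeight_mul_sum_sum_lt hp,
      meanFieldCoupling_succ]
    have h2 : (0 : ℝ) < 2 ^ (2 * σ * ((k : ℝ) + 1)) := by positivity
    push_cast
    field_simp
    ring

lemma meanField_le_dysonF (h β J σ : ℝ) {p : Bool → ℝ} (hp_pos : ∀ b, 0 < p b)
    (hp : ∑ b, p b = 1) (k : ℕ) :
    β * h * (∑ b, p b * spin b) +
        β * J / 2 * meanFieldCoupling σ k * (∑ b, p b * spin b) ^ 2 -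
        ∑ b, p b * log (p b) ≤ dysonF h β J σ k := by
  have hgibbs := sum_mul_sub_log_le_log_sum_exp (prodWeight_pos hp_pos) (sum_prodWeight hp)
    (fun S : Fin (2 ^ k) → Bool => -β * dysonH J σ k S + β * h * ∑ i, spin (S i))
  have hexpect : ∑ S : Fin (2 ^ k) → Bool, prodWeight p S *
        (-β * dysonH J σ k S + β * h * ∑ i, spin (S i) - log (prodWeight p S)) =
      -β * ∑ S : Fin (2 ^ k) → Bool, prodWeight p S * dysonH J σ k S +
        β * h * ∑ S : Fin (2 ^ k) → Bool, prodWeight p S * ∑ i, spin (S i) -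
        ∑ S : Fin (2 ^ k) → Bool, prodWeight p S * log (prodWeight p S) := by
    simp only [mul_sub, mul_add, sum_sub_distrib, sum_add_distrib, mul_left_comm _ (-β),
      mul_left_comm _ (β * h), ← mul_sum]
  rw [hexpect, sum_prodWeight_mul_dysonH hp, sum_prodWeight_mul_sum_apply hp,
    sum_prodWeight_mul_log hp_pos hp, Fintype.card_fin] at hgibbs
  rw [dysonF, le_inv_mul_iff₀ (by positivity)]
  push_cast at hgibbs
  linarith

noncomputable def tiltedWeight (x : ℝ) (b : Bool) : ℝ := exp (x * spin b) / (2 * cosh x)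

lemma tiltedWeight_pos (x : ℝ) (b : Bool) : 0 < tiltedWeight x b := by
  unfold tiltedWeight
  have hc := cosh_pos x
  positivity

lemma sum_tiltedWeight (x : ℝ) : ∑ b, tiltedWeight x b = 1 := by
  have hc := cosh_pos x
  simp only [tiltedWeight, Fintype.sum_bool, spin, if_true, Bool.false_eq_true, if_false,
    cosh_eq]
  field_simp

lemma sum_tiltedWeight_mul_spin (x : ℝ) : ∑ b, tiltedWeight x b * spin b = tanh x := by
  have hc := cosh_pos x
  simp only [tiltedWeight, Fintype.sum_bool, spin, if_true, Bool.false_eq_true, if_false,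
    tanh_eq_sinh_div_cosh, sinh_eq]
  field_simp
  ring_nf

lemma sum_tiltedWeight_mul_log (x : ℝ) :
    ∑ b, tiltedWeight x b * log (tiltedWeight x b) = x * tanh x - log (2 * cosh x) := by
  have hlog (b : Bool) : log (tiltedWeight x b) = x * spin b - log (2 * cosh x) := by
    rw [tiltedWeight, log_div (exp_ne_zero _) (by positivity [cosh_pos x]), log_exp]
  simp only [hlog, mul_sub, sum_sub_distrib, ← sum_mul, sum_tiltedWeight, one_mul,
    ← sum_tiltedWeight_mul_spin x, mul_sum, mul_left_comm x]

lemma meanFieldCoupling_nonneg (σ : ℝ) (k : ℕ) : 0 ≤ meanFieldCoupling σ k :=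
  sum_nonneg fun l _ =>
    div_nonneg (by simpa using one_le_pow₀ (one_le_two (α := ℝ))) (by positivity)

lemma tendsto_sum_range_pow_succ {r : ℝ} (h0 : 0 ≤ r) (h1 : r < 1) :
    Tendsto (fun k => ∑ l ∈ range k, r ^ (l + 1)) atTop (𝓝 (r / (1 - r))) := by
  simp_rw [pow_succ', ← mul_sum, div_eq_mul_inv]
  exact (hasSum_geometric_of_lt_one h0 h1).tendsto_sum_nat.const_mul r

lemma tendsto_sum_range_two_rpow_neg_pow_succ {y : ℝ} (hy : 0 < y) :
    Tendsto (fun k => ∑ l ∈ range k, ((2 : ℝ) ^ (-y)) ^ (l + 1)) atTop (𝓝 (Cconst y)) :=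
  tendsto_sum_range_pow_succ (by positivity)
    (rpow_lt_one_of_one_lt_of_neg one_lt_two (by linarith))

lemma meanFieldCoupling_eq (σ : ℝ) (k : ℕ) :
    meanFieldCoupling σ k =
      ∑ l ∈ range k, ((2 : ℝ) ^ (-(2 * σ - 1))) ^ (l + 1) -
        ∑ l ∈ range k, ((2 : ℝ) ^ (-(2 * σ))) ^ (l + 1) := by
  rw [meanFieldCoupling, ← sum_sub_distrib]
  refine sum_congr rfl fun l _ => ?_
  have h2 : (0 : ℝ) < 2 := two_pos
  rw [← rpow_mul_natCast h2.le, ← rpow_mul_natCast h2.le, sub_div, ← rpow_natCast,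
    ← rpow_sub h2, one_div, ← rpow_neg h2.le]
  push_cast
  ring_nf

lemma tendsto_meanFieldCoupling {σ : ℝ} (hσ : 1 / 2 < σ) :
    Tendsto (meanFieldCoupling σ) atTop (𝓝 (Cconst (2 * σ - 1) - Cconst (2 * σ))) := by
  simp_rw [funext (meanFieldCoupling_eq σ)]
  exact (tendsto_sum_range_two_rpow_neg_pow_succ (by linarith)).sub
    (tendsto_sum_range_two_rpow_neg_pow_succ (by linarith))

/-- non-mean-field bound for the pure state of the DHM. -/
theorem dyson_nmf_pure_bound (β J σ h m : ℝ) (hβ : 0 < β) (hJ : 0 < J)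
    (hσ : σ ∈ Set.Ioo (1 / 2 : ℝ) 1) (F : ℝ)
    (hF : Tendsto (fun k => dysonF h β J σ k) atTop (nhds F)) :
    F ≥ Real.log 2 +
        Real.log (Real.cosh (β * h + β * J * m * (Cconst (2 * σ - 1) - Cconst (2 * σ)))) -
        β * J / 2 * (Cconst (2 * σ - 1) - Cconst (2 * σ)) * m ^ 2 := by
  set D := Cconst (2 * σ - 1) - Cconst (2 * σ)
  set x := β * h + β * J * m * D with hx
  have hD : Tendsto (meanFieldCoupling σ) atTop (𝓝 D) := tendsto_meanFieldCoupling hσ.1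
  have hD_nonneg : 0 ≤ D := ge_of_tendsto' hD (meanFieldCoupling_nonneg σ)
  have hF_ge :
      β * h * tanh x + β * J / 2 * D * tanh x ^ 2 - (x * tanh x - log (2 * cosh x)) ≤ F :=
    le_of_tendsto_of_tendsto' (((hD.const_mul _).mul_const _).const_add _ |>.sub_const _) hF
      fun k => by
        simpa only [sum_tiltedWeight_mul_spin, sum_tiltedWeight_mul_log] using
          meanField_le_dysonF h β J σ (tiltedWeight_pos x) (sum_tiltedWeight x) k
  have hsq : 0 ≤ β * J / 2 * D * (tanh x - m) ^ 2 := by positivity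
  rw [log_mul two_ne_zero (cosh_pos x).ne'] at hF_ge
  linear_combination hF_ge + hsq + tanh x * hx
end
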